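/- For every real q with 0 < q < 1 and every complex x with |x| < 1, one has ∏_{m=0}^∞ ∏_{l=0}^∞ (1 − x q^{4(m+l)+2})² / ( (1 − x q^{4(m+l)}) (1 − x q^{4(m+l)+4}) ) = exp( Σ_{n=1}^∞ xⁿ / ( n (1 + q^{2n})² ) ), both the double infinite product and the series converging absolutely. -/

import Mathlib

/-!
By the Taylor series of `log (1 - w)` at `w = x q^{4k}, x q^{4k+2}, x q^{4k+4}`, the
logarithm of the factor of index `k = m + l` is `∑_{n ≥ 1} xⁿ (1 - q^{2n})² (q^{4n})^k / n`.
The resulting triple series over `(m, l, n)` converges absolutely, so it may be summed over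
`(m, l)` first, where `∑_{m,l} (q^{4n})^{m+l} = (1 - q^{4n})⁻²` and
`(1 - q^{2n})² / (1 - q^{4n})² = (1 + q^{2n})⁻²`.
-/

open Complex

theorem hasSum_pow_add_of_norm_lt_one {K : Type*} [NormedDivisionRing K] {y : K}
    (hy : ‖y‖ < 1) :
    HasSum (fun p : ℕ × ℕ => y ^ (p.1 + p.2)) ((1 - y) ^ 2)⁻¹ := by
  have hnorm : Summable fun n : ℕ => ‖y ^ n‖ := by
    simpa only [norm_pow] using summable_geometric_of_lt_one (norm_nonneg y) hy
  have hgeom := hasSum_geometric_of_norm_lt_one hy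
  simpa only [pow_add, sq, mul_inv_rev] using
    hgeom.mul hgeom (summable_mul_of_summable_norm' hnorm hgeom.summable hnorm hgeom.summable)

theorem exp_two_mul_log_sub_log_sub_log {a b c : ℂ} (ha : a ≠ 0) (hb : b ≠ 0) (hc : c ≠ 0) :
    exp (2 * log a - log b - log c) = a ^ 2 / (b * c) := by
  rw [sub_sub, exp_sub, two_mul, exp_add, exp_add, exp_log ha, exp_log hb, exp_log hc, sq]

theorem norm_mul_pow_lt_one {x q : ℂ} (hx : ‖x‖ < 1) (hq : ‖q‖ ≤ 1) (j : ℕ) :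
    ‖x * q ^ j‖ < 1 := by
  rw [norm_mul, norm_pow]
  exact (mul_le_of_le_one_right (norm_nonneg x) (pow_le_one₀ (norm_nonneg q) hq)).trans_lt hx

noncomputable def qFactor (x q : ℂ) (k : ℕ) : ℂ :=
  (1 - x * q ^ (4 * k + 2)) ^ 2 / ((1 - x * q ^ (4 * k)) * (1 - x * q ^ (4 * k + 4)))

-- At `n = 0` the division by `(0 : ℂ)` makes this `0`, matching the vanishing constant terms
-- of both the logarithmic series and the resummed series.
noncomputable def logQFactorTerm (x q : ℂ) (p : ℕ × ℕ) (n : ℕ) : ℂ :=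
  x ^ n * (1 - q ^ (2 * n)) ^ 2 / n * (q ^ (4 * n)) ^ (p.1 + p.2)

section

variable {x q : ℂ}

theorem norm_logQFactorTerm_le (hq : ‖q‖ ≤ 1) (p : ℕ × ℕ) (n : ℕ) :
    ‖logQFactorTerm x q p n‖ ≤ (‖q‖ ^ 4) ^ (p.1 + p.2) * (4 * ‖x‖ ^ n) := by
  rcases n.eq_zero_or_pos with rfl | hn
  · simp [logQFactorTerm]
  have h_one_sub : ‖1 - q ^ (2 * n)‖ ≤ 2 := by
    have := pow_le_one₀ (n := 2 * n) (norm_nonneg q) hq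
    calc ‖1 - q ^ (2 * n)‖ ≤ ‖(1 : ℂ)‖ + ‖q ^ (2 * n)‖ := norm_sub_le _ _
      _ ≤ 2 := by rw [norm_one, norm_pow]; linarith
  have h_n : 1 ≤ ‖(n : ℂ)‖ := by rw [norm_natCast]; exact_mod_cast hn
  have h_geom : (‖q‖ ^ (4 * n)) ^ (p.1 + p.2) ≤ (‖q‖ ^ 4) ^ (p.1 + p.2) := by
    rw [pow_mul]
    exact pow_le_pow_left₀ (by positivity)
      (pow_le_of_le_one (by positivity) (pow_le_one₀ (norm_nonneg q) hq) hn.ne') _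
  calc ‖logQFactorTerm x q p n‖
      = ‖x‖ ^ n * ‖1 - q ^ (2 * n)‖ ^ 2 / ‖(n : ℂ)‖ * (‖q‖ ^ (4 * n)) ^ (p.1 + p.2) := by
        simp only [logQFactorTerm, norm_mul, norm_div, norm_pow]
    _ ≤ ‖x‖ ^ n * 2 ^ 2 / 1 * (‖q‖ ^ 4) ^ (p.1 + p.2) := by gcongr
    _ = (‖q‖ ^ 4) ^ (p.1 + p.2) * (4 * ‖x‖ ^ n) := by ring

theorem summable_norm_logQFactorTerm (hx : ‖x‖ < 1) (hq : ‖q‖ < 1) :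
    Summable fun pn : (ℕ × ℕ) × ℕ => ‖logQFactorTerm x q pn.1 pn.2‖ := by
  have hq4 : ‖‖q‖ ^ 4‖ < 1 := by
    rw [norm_pow, norm_norm]; exact pow_lt_one₀ (norm_nonneg q) hq (by norm_num)
  exact .of_nonneg_of_le (fun _ => norm_nonneg _)
    (fun pn => norm_logQFactorTerm_le hq.le pn.1 pn.2)
    ((hasSum_pow_add_of_norm_lt_one hq4).summable.mul_of_nonneg
      ((summable_geometric_of_lt_one (norm_nonneg x) hx).mul_left 4)
      (fun _ => by positivity) (fun _ => by positivity))

theorem logQFactorTerm_eq (p : ℕ × ℕ) (n : ℕ) :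
    logQFactorTerm x q p n = (x * q ^ (4 * (p.1 + p.2))) ^ n / n
      + (x * q ^ (4 * (p.1 + p.2) + 4)) ^ n / n
      - 2 * ((x * q ^ (4 * (p.1 + p.2) + 2)) ^ n / n) := by
  simp only [logQFactorTerm]
  ring

theorem hasSum_logQFactorTerm_nat (hx : ‖x‖ < 1) (hq : ‖q‖ ≤ 1) (p : ℕ × ℕ) :
    HasSum (logQFactorTerm x q p)
      (2 * log (1 - x * q ^ (4 * (p.1 + p.2) + 2)) - log (1 - x * q ^ (4 * (p.1 + p.2)))
        - log (1 - x * q ^ (4 * (p.1 + p.2) + 4))) := by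
  have h_log j := hasSum_taylorSeries_neg_log (norm_mul_pow_lt_one hx hq j)
  have h_sum := ((h_log (4 * (p.1 + p.2))).add (h_log (4 * (p.1 + p.2) + 4))).sub
    ((h_log (4 * (p.1 + p.2) + 2)).mul_left 2)
  rw [show ∀ a b c : ℂ, 2 * a - b - c = -b + -c - 2 * -a by intros; ring]
  exact h_sum.congr_fun (logQFactorTerm_eq p)

theorem hasSum_logQFactorTerm_prod (hq : ‖q‖ < 1) (n : ℕ) :
    HasSum (fun p => logQFactorTerm x q p n) (x ^ n / (n * (1 + q ^ (2 * n)) ^ 2)) := by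
  rcases n.eq_zero_or_pos with rfl | hn
  · simp [logQFactorTerm, hasSum_zero]
  have hq2 : ‖q ^ (2 * n)‖ < 1 := by
    rw [norm_pow]; exact pow_lt_one₀ (norm_nonneg q) hq (by omega)
  have hq4 : ‖q ^ (4 * n)‖ < 1 := by
    rw [norm_pow]; exact pow_lt_one₀ (norm_nonneg q) hq (by omega)
  have h_sub : 1 - q ^ (2 * n) ≠ 0 := (isUnit_one_sub_of_norm_lt_one hq2).ne_zero
  have h_add : 1 + q ^ (2 * n) ≠ 0 := by
    have h := isUnit_one_sub_of_norm_lt_one (x := -q ^ (2 * n)) (by rwa [norm_neg])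
    simpa using h.ne_zero
  have h_n : (n : ℂ) ≠ 0 := by exact_mod_cast hn.ne'
  have h_split : 1 - q ^ (4 * n) = (1 - q ^ (2 * n)) * (1 + q ^ (2 * n)) := by ring
  have h_value : x ^ n / (n * (1 + q ^ (2 * n)) ^ 2)
      = x ^ n * (1 - q ^ (2 * n)) ^ 2 / n * ((1 - q ^ (4 * n)) ^ 2)⁻¹ := by
    rw [h_split]
    field_simp
  rw [h_value]
  exact ((hasSum_pow_add_of_norm_lt_one hq4).mul_left _).congr_fun fun p => rfl

theorem hasSum_resummed_tsum_logQFactorTerm (hx : ‖x‖ < 1) (hq : ‖q‖ < 1) :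
    HasSum (fun n : ℕ => x ^ n / (n * (1 + q ^ (2 * n)) ^ 2))
      (∑' pn : (ℕ × ℕ) × ℕ, logQFactorTerm x q pn.1 pn.2) :=
  ((Equiv.prodComm _ _).hasSum_iff.mpr (summable_norm_logQFactorTerm hx hq).of_norm.hasSum)
    |>.prod_fiberwise (hasSum_logQFactorTerm_prod hq)

theorem summable_norm_resummed (hx : ‖x‖ < 1) (hq : ‖q‖ < 1) :
    Summable fun n : ℕ => ‖x ^ n / (n * (1 + q ^ (2 * n)) ^ 2)‖ := by
  have h := (summable_norm_logQFactorTerm hx hq).prod_symm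
  refine .of_nonneg_of_le (fun _ => norm_nonneg _) (fun n => ?_) h.prod
  rw [← (hasSum_logQFactorTerm_prod hq n).tsum_eq]
  exact norm_tsum_le_tsum_norm (h.prod_factor n)

theorem hasProd_qFactor (hx : ‖x‖ < 1) (hq : ‖q‖ < 1) :
    HasProd (fun p : ℕ × ℕ => qFactor x q (p.1 + p.2))
      (exp (∑' pn : (ℕ × ℕ) × ℕ, logQFactorTerm x q pn.1 pn.2)) := by
  have h_log := (summable_norm_logQFactorTerm hx hq).of_norm.hasSum.prod_fiberwise
    (hasSum_logQFactorTerm_nat hx hq.le)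
  refine h_log.cexp.congr_fun fun p => ?_
  have h_ne j : 1 - x * q ^ j ≠ 0 :=
    (isUnit_one_sub_of_norm_lt_one (norm_mul_pow_lt_one hx hq.le j)).ne_zero
  rw [Function.comp_apply, exp_two_mul_log_sub_log_sub_log (h_ne _) (h_ne _) (h_ne _)]
  rfl

end

theorem double_prod_eq_exp_tsum_resummation (q : ℝ) (hq0 : 0 < q) (hq1 : q < 1) (x : ℂ)
    (hx : ‖x‖ < 1) :
    Multipliable (fun p : ℕ × ℕ =>
      (1 - x * (q : ℂ) ^ (4 * (p.1 + p.2) + 2)) ^ 2 /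
        ((1 - x * (q : ℂ) ^ (4 * (p.1 + p.2))) * (1 - x * (q : ℂ) ^ (4 * (p.1 + p.2) + 4)))) ∧
    Summable (fun n : ℕ =>
      ‖x ^ (n + 1) / (((n : ℂ) + 1) * (1 + (q : ℂ) ^ (2 * (n + 1))) ^ 2)‖) ∧
    (∏' p : ℕ × ℕ,
      (1 - x * (q : ℂ) ^ (4 * (p.1 + p.2) + 2)) ^ 2 /
        ((1 - x * (q : ℂ) ^ (4 * (p.1 + p.2))) * (1 - x * (q : ℂ) ^ (4 * (p.1 + p.2) + 4)))) =
      Complex.exp (∑' n : ℕ,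
        x ^ (n + 1) / (((n : ℂ) + 1) * (1 + (q : ℂ) ^ (2 * (n + 1))) ^ 2)) := by
  have hq : ‖(q : ℂ)‖ < 1 := by rwa [norm_real, Real.norm_of_nonneg hq0.le]
  have h_prod := hasProd_qFactor hx hq
  have h_sum := hasSum_resummed_tsum_logQFactorTerm hx hq
  refine ⟨h_prod.multipliable, ?_, ?_⟩
  · simpa using (summable_nat_add_iff 1).mpr (summable_norm_resummed hx hq)
  · refine h_prod.tprod_eq.trans ?_
    rw [← h_sum.tsum_eq, h_sum.summable.tsum_eq_zero_add]
    simp
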